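/- arXiv:0806.3898 — 5 statements merged into one kernel-verified Lean document; each statement's English description precedes it below -/
import Mathlib

section
/- Let Θ = ({D_g}, {θ_g}, {w_{g,h}}) be a twisted partial action of a group G on a k-algebra A. Then for all g in G and a in D_{g⁻¹}: θ_g(a · w_{g⁻¹,g}) = θ_g(a) · w_{g,g⁻¹}. -/
/-- The additive subgroup generated by products of elements of `S` and `T`. -/
def setMul {A : Type} [NonUnitalRing A] (S T : AddSubgroup A) : AddSubgroup A :=
  AddSubgroup.closure (Set.image2 (· * ·) (S : Set A) (T : Set A))

/-- A twisted partial action of a group `G` on a (non-necessarily unital)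
`k`-algebra `A` (Definition 2.1 of the paper).  The family `D g` consists of
idempotent, pairwise commuting two-sided ideals, `θ g : D g⁻¹ → D g` are
`k`-algebra isomorphisms (with inverses `θinv g`), and `(wL g h, wR g h)` is an
invertible multiplier of `D g · D (g*h)` (with inverse `(winvL g h, winvR g h)`). -/
structure TwistedPartialAction (k : Type) [CommRing k] (G : Type) [Group G]
    (A : Type) [NonUnitalRing A] [Module k A] where
  D : G → AddSubgroup A
  mul_mem_left : ∀ g (a x : A), x ∈ D g → a * x ∈ D g
  mul_mem_right : ∀ g (a x : A), x ∈ D g → x * a ∈ D g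
  smul_mem : ∀ g (c : k) (x : A), x ∈ D g → c • x ∈ D g
  idem : ∀ g, setMul (D g) (D g) = D g
  commute : ∀ g h, setMul (D g) (D h) = setMul (D h) (D g)
  θ : G → A → A
  θinv : G → A → A
  D_one : D 1 = ⊤
  θ_one : ∀ a : A, θ 1 a = a
  θ_mem : ∀ g a, a ∈ D g⁻¹ → θ g a ∈ D g
  θinv_mem : ∀ g a, a ∈ D g → θinv g a ∈ D g⁻¹
  θ_add : ∀ g a b, a ∈ D g⁻¹ → b ∈ D g⁻¹ → θ g (a + b) = θ g a + θ g b
  θ_smul : ∀ g (c : k) a, a ∈ D g⁻¹ → θ g (c • a) = c • θ g a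
  θ_mul : ∀ g a b, a ∈ D g⁻¹ → b ∈ D g⁻¹ → θ g (a * b) = θ g a * θ g b
  θ_left_inv : ∀ g a, a ∈ D g⁻¹ → θinv g (θ g a) = a
  θ_right_inv : ∀ g a, a ∈ D g → θ g (θinv g a) = a
  θ_image : ∀ g h, θ g '' (setMul (D g⁻¹) (D h) : Set A) = (setMul (D g) (D (g * h)) : Set A)
  wL : G → G → A → A
  wR : G → G → A → A
  winvL : G → G → A → A
  winvR : G → G → A → A
  wL_mem : ∀ g h x, x ∈ setMul (D g) (D (g * h)) → wL g h x ∈ setMul (D g) (D (g * h))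
  wR_mem : ∀ g h x, x ∈ setMul (D g) (D (g * h)) → wR g h x ∈ setMul (D g) (D (g * h))
  winvL_mem : ∀ g h x, x ∈ setMul (D g) (D (g * h)) → winvL g h x ∈ setMul (D g) (D (g * h))
  winvR_mem : ∀ g h x, x ∈ setMul (D g) (D (g * h)) → winvR g h x ∈ setMul (D g) (D (g * h))
  wL_add : ∀ g h x y, x ∈ setMul (D g) (D (g * h)) → y ∈ setMul (D g) (D (g * h)) →
    wL g h (x + y) = wL g h x + wL g h y
  wR_add : ∀ g h x y, x ∈ setMul (D g) (D (g * h)) → y ∈ setMul (D g) (D (g * h)) →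
    wR g h (x + y) = wR g h x + wR g h y
  winvL_add : ∀ g h x y, x ∈ setMul (D g) (D (g * h)) → y ∈ setMul (D g) (D (g * h)) →
    winvL g h (x + y) = winvL g h x + winvL g h y
  winvR_add : ∀ g h x y, x ∈ setMul (D g) (D (g * h)) → y ∈ setMul (D g) (D (g * h)) →
    winvR g h (x + y) = winvR g h x + winvR g h y
  wL_mul : ∀ g h x y, x ∈ setMul (D g) (D (g * h)) → y ∈ setMul (D g) (D (g * h)) →
    wL g h (x * y) = wL g h x * y
  wR_mul : ∀ g h x y, x ∈ setMul (D g) (D (g * h)) → y ∈ setMul (D g) (D (g * h)) →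
    wR g h (x * y) = x * wR g h y
  w_compat : ∀ g h x y, x ∈ setMul (D g) (D (g * h)) → y ∈ setMul (D g) (D (g * h)) →
    wR g h x * y = x * wL g h y
  winvL_mul : ∀ g h x y, x ∈ setMul (D g) (D (g * h)) → y ∈ setMul (D g) (D (g * h)) →
    winvL g h (x * y) = winvL g h x * y
  winvR_mul : ∀ g h x y, x ∈ setMul (D g) (D (g * h)) → y ∈ setMul (D g) (D (g * h)) →
    winvR g h (x * y) = x * winvR g h y
  winv_compat : ∀ g h x y, x ∈ setMul (D g) (D (g * h)) → y ∈ setMul (D g) (D (g * h)) →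
    winvR g h x * y = x * winvL g h y
  wL_inv : ∀ g h x, x ∈ setMul (D g) (D (g * h)) → winvL g h (wL g h x) = x
  wL_inv' : ∀ g h x, x ∈ setMul (D g) (D (g * h)) → wL g h (winvL g h x) = x
  wR_inv : ∀ g h x, x ∈ setMul (D g) (D (g * h)) → winvR g h (wR g h x) = x
  wR_inv' : ∀ g h x, x ∈ setMul (D g) (D (g * h)) → wR g h (winvR g h x) = x
  w_one_left : ∀ g x, x ∈ D g → wL 1 g x = x ∧ wR 1 g x = x
  w_one_right : ∀ g x, x ∈ D g → wL g 1 x = x ∧ wR g 1 x = x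
  θ_comp : ∀ g h a, a ∈ setMul (D h⁻¹) (D (h⁻¹ * g⁻¹)) →
    θ g (θ h a) = winvR g h (wL g h (θ (g * h) a))
  cocycle : ∀ g h t a, a ∈ setMul (setMul (D g⁻¹) (D h)) (D (h * t)) →
    wR g (h * t) (θ g (wR h t a)) = wR (g * h) t (wR g h (θ g a))

/-!
Apply the cocycle identity to the triple `(g, g⁻¹, g)`: it reads
`θ_g(a w_{g⁻¹,g}) w_{g,1} = θ_g(a) w_{g,g⁻¹} w_{1,g}`, and both `w_{g,1}` and `w_{1,g}` act
trivially. The only work is checking that every element lies in the ideal where the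
multipliers are evaluated, using `D_g D_1 = D_g`.
-/

theorem setMul_le {A : Type} [NonUnitalRing A] {S T U : AddSubgroup A}
    (h : ∀ s t : A, s ∈ S → t ∈ T → s * t ∈ U) : setMul S T ≤ U :=
  (AddSubgroup.closure_le U).mpr <| by
    rintro x ⟨s, hs, t, ht, rfl⟩
    exact h s t hs ht

theorem setMul_mono_right {A : Type} [NonUnitalRing A] {S T T' : AddSubgroup A}
    (h : T ≤ T') : setMul S T ≤ setMul S T' :=
  AddSubgroup.closure_mono (Set.image2_subset le_rfl h)

namespace TwistedPartialAction

variable {k G A : Type} [CommRing k] [Group G] [NonUnitalRing A] [Module k A]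
  (Θ : TwistedPartialAction k G A)

theorem setMul_D_le (g : G) (T : AddSubgroup A) : setMul (Θ.D g) T ≤ Θ.D g :=
  setMul_le fun _ t hs _ => Θ.mul_mem_right g t _ hs

theorem setMul_D_one (g : G) : setMul (Θ.D g) (Θ.D 1) = Θ.D g := by
  refine le_antisymm (Θ.setMul_D_le g _) ?_
  calc Θ.D g = setMul (Θ.D g) (Θ.D g) := (Θ.idem g).symm
    _ ≤ setMul (Θ.D g) (Θ.D 1) := setMul_mono_right (Θ.D_one ▸ le_top)

theorem wR_mem_D {g h : G} {x : A} (hx : x ∈ setMul (Θ.D g) (Θ.D (g * h))) :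
    Θ.wR g h x ∈ Θ.D g :=
  Θ.setMul_D_le g _ (Θ.wR_mem g h x hx)

end TwistedPartialAction

/-- for a twisted partial action `Θ` of `G` on `A`,
`θ_g(a · w_{g⁻¹,g}) = θ_g(a) · w_{g,g⁻¹}` for all `g ∈ G`, `a ∈ D_{g⁻¹}`. -/
theorem twistedPartialAction_wR_compat {k G A : Type} [CommRing k] [Group G]
    [NonUnitalRing A] [Module k A]
    (Θ : TwistedPartialAction k G A) (g : G) (a : A) (ha : a ∈ Θ.D g⁻¹) :
    Θ.θ g (Θ.wR g⁻¹ g a) = Θ.wR g g⁻¹ (Θ.θ g a) := by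
  have ha' : a ∈ setMul (Θ.D g⁻¹) (Θ.D (g⁻¹ * g)) := by
    rwa [inv_mul_cancel, Θ.setMul_D_one]
  have hθa : Θ.θ g a ∈ setMul (Θ.D g) (Θ.D (g * g⁻¹)) := by
    rw [mul_inv_cancel, Θ.setMul_D_one]
    exact Θ.θ_mem g a ha
  have hcocycle := Θ.cocycle g g⁻¹ g a (by rwa [Θ.idem])
  rw [inv_mul_cancel, mul_inv_cancel] at hcocycle
  rwa [(Θ.w_one_right g _ (Θ.θ_mem g _ (Θ.wR_mem_D ha'))).2,
    (Θ.w_one_left g _ (Θ.wR_mem_D hθa)).2] at hcocycle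
end

section
/- Let Θ be a twisted partial action of a group G on a k-algebra A over a commutative unital ring k. Then the crossed product A ⋊_Θ G = ⊕_{g∈G} D_g δ_g, with multiplication (a_g δ_g)·(b_h δ_h) = θ_g(θ_g⁻¹(a_g)·b_h)·w_{g,h} δ_{gh}, is an associative k-algebra. -/
/-- The product of the monomials `a δ_g` and `b δ_h` in the crossed product
`A ⋊_Θ G`: `(a δ_g)·(b δ_h) = θ_g(θ_g⁻¹(a)·b)·w_{g,h} δ_{gh}`. -/
def crossedMul {k G A : Type} [CommRing k] [Group G] [NonUnitalRing A] [Module k A]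
    (Θ : TwistedPartialAction k G A) (g h : G) (a b : A) : A :=
  Θ.wR g h (Θ.θ g (Θ.θinv g a * b))

/-!
Put `u = θ_g⁻¹(a)`. On the right-hand side, `w_{h,t}` commutes past `u`, and the cocycle identity
turns `θ_g(u · θ_h(θ_h⁻¹(b) c) w_{h,t}) w_{g,ht}` into `θ_g(u · θ_h(θ_h⁻¹(b) c)) w_{g,h} w_{gh,t}`.
On the left-hand side, write `u b = θ_h(v)`: the twisted composition rule turns
`θ_g(θ_h(v)) w_{g,h}` into `w_{g,h} θ_{gh}(v)`, and right multiplication by `c` through `θ_{gh}`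
commutes with the left multiplier `w_{g,h}`, giving `w_{g,h} θ_{gh}(v c) = θ_g(θ_h(v c)) w_{g,h}`,
which is the same element since `θ_h(v c) = u · θ_h(θ_h⁻¹(b) c)`.
Multipliers of `D_g D_{gh}` commute with left `A`-linear maps because that ideal is idempotent,
a consequence of the `D_g` being idempotent and pairwise commuting.
-/

section setMul

variable {A : Type} [NonUnitalRing A] {S T U : AddSubgroup A}

theorem mul_mem_setMul {s t : A} (hs : s ∈ S) (ht : t ∈ T) : s * t ∈ setMul S T :=
  AddSubgroup.subset_closure (Set.mem_image2_of_mem hs ht)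

theorem setMul_le_s5 : setMul S T ≤ U ↔ ∀ s ∈ S, ∀ t ∈ T, s * t ∈ U := by
  rw [setMul, AddSubgroup.closure_le, Set.image2_subset_iff]
  rfl

theorem mul_mem_setMul_left (hS : ∀ r x, x ∈ S → r * x ∈ S) (r : A) {x : A}
    (hx : x ∈ setMul S T) : r * x ∈ setMul S T := by
  suffices setMul S T ≤ (setMul S T).comap (AddMonoidHom.mulLeft r) from this hx
  refine setMul_le_s5.2 fun s hs t ht => ?_
  show r * (s * t) ∈ setMul S T
  rw [← mul_assoc]
  exact mul_mem_setMul (hS r s hs) ht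

theorem mul_mem_setMul_right (hT : ∀ r x, x ∈ T → x * r ∈ T) (r : A) {x : A}
    (hx : x ∈ setMul S T) : x * r ∈ setMul S T := by
  suffices setMul S T ≤ (setMul S T).comap (AddMonoidHom.mulRight r) from this hx
  refine setMul_le_s5.2 fun s hs t ht => ?_
  show s * t * r ∈ setMul S T
  rw [mul_assoc]
  exact mul_mem_setMul hs (hT r t ht)

theorem setMul_le_left (hS : ∀ r x, x ∈ S → x * r ∈ S) : setMul S T ≤ S :=
  setMul_le_s5.2 fun s hs t _ => hS t s hs

theorem setMul_le_right (hT : ∀ r x, x ∈ T → r * x ∈ T) : setMul S T ≤ T :=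
  setMul_le_s5.2 fun s _ t ht => hT s t ht

theorem setMul_assoc : setMul (setMul S T) U = setMul S (setMul T U) := by
  apply le_antisymm
  · refine setMul_le_s5.2 fun x hx u hu => ?_
    suffices setMul S T ≤ (setMul S (setMul T U)).comap (AddMonoidHom.mulRight u) from this hx
    refine setMul_le_s5.2 fun s hs t ht => ?_
    show s * t * u ∈ setMul S (setMul T U)
    rw [mul_assoc]
    exact mul_mem_setMul hs (mul_mem_setMul ht hu)
  · refine setMul_le_s5.2 fun s hs x hx => ?_
    suffices setMul T U ≤ (setMul (setMul S T) U).comap (AddMonoidHom.mulLeft s) from this hx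
    refine setMul_le_s5.2 fun t ht u hu => ?_
    show s * (t * u) ∈ setMul (setMul S T) U
    rw [← mul_assoc]
    exact mul_mem_setMul (mul_mem_setMul hs ht) hu

def IsAdditiveOn (S : AddSubgroup A) (f : A → A) : Prop :=
  ∀ x y, x ∈ S → y ∈ S → f (x + y) = f x + f y

namespace IsAdditiveOn

variable {f g : A → A}

theorem map_zero (hf : IsAdditiveOn S f) : f 0 = 0 := by
  simpa using hf 0 0 (zero_mem S) (zero_mem S)

theorem map_neg (hf : IsAdditiveOn S f) {x : A} (hx : x ∈ S) : f (-x) = -f x := by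
  refine eq_neg_of_add_eq_zero_left ?_
  rw [← hf _ _ (neg_mem hx) hx, neg_add_cancel, hf.map_zero]

theorem mono (hf : IsAdditiveOn T f) (hST : S ≤ T) : IsAdditiveOn S f :=
  fun x y hx hy => hf x y (hST hx) (hST hy)

theorem comp (hg : IsAdditiveOn T g) (hf : IsAdditiveOn S f) (hfST : ∀ x ∈ S, f x ∈ T) :
    IsAdditiveOn S (fun x => g (f x)) :=
  fun x y hx hy => by simp only [hf x y hx hy, hg _ _ (hfST x hx) (hfST y hy)]

theorem mul_left (r : A) : IsAdditiveOn S (fun x => r * x) :=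
  fun x y _ _ => mul_add r x y

theorem mul_right (r : A) : IsAdditiveOn S (fun x => x * r) :=
  fun x y _ _ => add_mul x y r

theorem eqOn_setMul (hf : IsAdditiveOn U f) (hg : IsAdditiveOn U g) (hU : setMul S T ≤ U)
    (h : ∀ s ∈ S, ∀ t ∈ T, f (s * t) = g (s * t)) : ∀ x ∈ setMul S T, f x = g x := by
  intro x hx
  have hxU := hU hx
  unfold setMul at hx
  induction hx using AddSubgroup.closure_induction with
  | mem x hx =>
    obtain ⟨s, hs, t, ht, rfl⟩ := hx
    exact h s hs t ht
  | zero => rw [hf.map_zero, hg.map_zero]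
  | add x y hx hy ihx ihy =>
    rw [hf x y (hU hx) (hU hy), hg x y (hU hx) (hU hy), ihx (hU hx), ihy (hU hy)]
  | neg x hx ih => rw [hf.map_neg (hU hx), hg.map_neg (hU hx), ih (hU hx)]

end IsAdditiveOn

end setMul

namespace TwistedPartialAction

variable {k G A : Type} [CommRing k] [Group G] [NonUnitalRing A] [Module k A]
  (Θ : TwistedPartialAction k G A)

theorem setMul_le_D_left (g h : G) : setMul (Θ.D g) (Θ.D h) ≤ Θ.D g :=
  setMul_le_left (Θ.mul_mem_right g)

theorem setMul_le_D_right (g h : G) : setMul (Θ.D g) (Θ.D h) ≤ Θ.D h :=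
  setMul_le_right (Θ.mul_mem_left h)

theorem setMul_D_idem (g h : G) :
    setMul (setMul (Θ.D g) (Θ.D h)) (setMul (Θ.D g) (Θ.D h)) = setMul (Θ.D g) (Θ.D h) := by
  conv_rhs => rw [← Θ.idem g, ← Θ.idem h]
  simp only [setMul_assoc]
  rw [← setMul_assoc (S := Θ.D h) (T := Θ.D g), Θ.commute h g, setMul_assoc]

theorem setMul_D_eq_mul_inv (g h : G) :
    setMul (Θ.D g) (Θ.D (g * h)) = setMul (Θ.D (g * h)) (Θ.D (g * h * h⁻¹)) := by
  rw [mul_inv_cancel_right, Θ.commute]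

theorem θ_injOn (g : G) {x y : A} (hx : x ∈ Θ.D g⁻¹) (hy : y ∈ Θ.D g⁻¹)
    (h : Θ.θ g x = Θ.θ g y) : x = y := by
  rw [← Θ.θ_left_inv g x hx, h, Θ.θ_left_inv g y hy]

theorem θinv_add (g : G) : IsAdditiveOn (Θ.D g) (Θ.θinv g) := by
  intro x y hx hy
  have hx' := Θ.θinv_mem g x hx
  have hy' := Θ.θinv_mem g y hy
  apply Θ.θ_injOn g (Θ.θinv_mem g _ (add_mem hx hy)) (add_mem hx' hy')
  rw [Θ.θ_right_inv g _ (add_mem hx hy), Θ.θ_add g _ _ hx' hy', Θ.θ_right_inv g x hx,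
    Θ.θ_right_inv g y hy]

theorem θinv_mul (g : G) {x y : A} (hx : x ∈ Θ.D g) (hy : y ∈ Θ.D g) :
    Θ.θinv g (x * y) = Θ.θinv g x * Θ.θinv g y := by
  have hx' := Θ.θinv_mem g x hx
  have hy' := Θ.θinv_mem g y hy
  have hxy := Θ.mul_mem_left g x y hy
  apply Θ.θ_injOn g (Θ.θinv_mem g _ hxy) (Θ.mul_mem_left g⁻¹ _ _ hy')
  rw [Θ.θ_right_inv g _ hxy, Θ.θ_mul g _ _ hx' hy', Θ.θ_right_inv g x hx,
    Θ.θ_right_inv g y hy]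

theorem θ_mem_setMul {g s : G} {x : A} (hx : x ∈ setMul (Θ.D g⁻¹) (Θ.D s)) :
    Θ.θ g x ∈ setMul (Θ.D g) (Θ.D (g * s)) := by
  rw [← SetLike.mem_coe, ← Θ.θ_image g s]
  exact Set.mem_image_of_mem _ hx

theorem θinv_mem_setMul {g s : G} {x : A} (hx : x ∈ setMul (Θ.D g) (Θ.D (g * s))) :
    Θ.θinv g x ∈ setMul (Θ.D g⁻¹) (Θ.D s) := by
  rw [← SetLike.mem_coe, ← Θ.θ_image g s] at hx
  obtain ⟨y, hy, rfl⟩ := hx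
  rwa [Θ.θ_left_inv g y (Θ.setMul_le_D_left _ _ hy)]

theorem θ_mul_mem_setMul {g h : G} {v : A} (hv : v ∈ setMul (Θ.D h⁻¹) (Θ.D (h⁻¹ * g⁻¹))) :
    Θ.θ (g * h) v ∈ setMul (Θ.D g) (Θ.D (g * h)) := by
  rw [Θ.setMul_D_eq_mul_inv]
  apply Θ.θ_mem_setMul
  rwa [mul_inv_rev, Θ.commute]

theorem mul_wR {g h : G} (r : A) {x : A} (hx : x ∈ setMul (Θ.D g) (Θ.D (g * h))) :
    r * Θ.wR g h x = Θ.wR g h (r * x) := by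
  have hrE : ∀ y ∈ setMul (Θ.D g) (Θ.D (g * h)), r * y ∈ setMul (Θ.D g) (Θ.D (g * h)) :=
    fun y => mul_mem_setMul_left (Θ.mul_mem_left g) r
  rw [← Θ.setMul_D_idem] at hx
  refine IsAdditiveOn.eqOn_setMul ((IsAdditiveOn.mul_left r).comp (Θ.wR_add g h) (Θ.wR_mem g h))
    (IsAdditiveOn.comp (Θ.wR_add g h) (IsAdditiveOn.mul_left r) hrE) (Θ.setMul_D_idem g (g * h)).le
    (fun p hp q hq => ?_) x hx
  rw [Θ.wR_mul g h p q hp hq, ← mul_assoc, ← Θ.wR_mul g h _ q (hrE p hp) hq, mul_assoc]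

theorem map_wL {g h : G} {f : A → A} (hf : IsAdditiveOn (setMul (Θ.D g) (Θ.D (g * h))) f)
    (hfE : ∀ x ∈ setMul (Θ.D g) (Θ.D (g * h)), f x ∈ setMul (Θ.D g) (Θ.D (g * h)))
    (hf_mul : ∀ r, ∀ x ∈ setMul (Θ.D g) (Θ.D (g * h)), f (r * x) = r * f x)
    {x : A} (hx : x ∈ setMul (Θ.D g) (Θ.D (g * h))) : f (Θ.wL g h x) = Θ.wL g h (f x) := by
  rw [← Θ.setMul_D_idem] at hx
  refine IsAdditiveOn.eqOn_setMul (hf.comp (Θ.wL_add g h) (Θ.wL_mem g h))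
    (IsAdditiveOn.comp (Θ.wL_add g h) hf hfE) (Θ.setMul_D_idem g (g * h)).le
    (fun p hp q hq => ?_) x hx
  rw [Θ.wL_mul g h p q hp hq, hf_mul _ q hq, ← Θ.wL_mul g h p _ hp (hfE q hq), hf_mul p q hq]

theorem wR_θ_θ {g h : G} {v : A} (hv : v ∈ setMul (Θ.D h⁻¹) (Θ.D (h⁻¹ * g⁻¹))) :
    Θ.wR g h (Θ.θ g (Θ.θ h v)) = Θ.wL g h (Θ.θ (g * h) v) := by
  rw [Θ.θ_comp g h v hv, Θ.wR_inv' g h _ (Θ.wL_mem g h _ (Θ.θ_mul_mem_setMul hv))]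

/-- `(a δ_g) · (b δ_1) = rightAct g a b δ_g`. -/
def rightAct (g : G) (a b : A) : A :=
  Θ.θ g (Θ.θinv g a * b)

theorem rightAct_θ (g : G) {v : A} (hv : v ∈ Θ.D g⁻¹) (c : A) :
    Θ.rightAct g (Θ.θ g v) c = Θ.θ g (v * c) := by
  rw [rightAct, Θ.θ_left_inv g v hv]

theorem rightAct_mem {g h : G} {a b : A} (ha : a ∈ Θ.D g) (hb : b ∈ Θ.D h) :
    Θ.rightAct g a b ∈ setMul (Θ.D g) (Θ.D (g * h)) :=
  Θ.θ_mem_setMul (mul_mem_setMul (Θ.θinv_mem g a ha) hb)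

theorem rightAct_mem_setMul {g s : G} {x : A} (hx : x ∈ setMul (Θ.D g) (Θ.D (g * s))) (c : A) :
    Θ.rightAct g x c ∈ setMul (Θ.D g) (Θ.D (g * s)) :=
  Θ.θ_mem_setMul (mul_mem_setMul_right (Θ.mul_mem_right s) c (Θ.θinv_mem_setMul hx))

theorem rightAct_add (g : G) (c : A) : IsAdditiveOn (Θ.D g) (fun x => Θ.rightAct g x c) :=
  IsAdditiveOn.comp (Θ.θ_add g) ((IsAdditiveOn.mul_right c).comp (Θ.θinv_add g) (Θ.θinv_mem g))
    fun x hx => Θ.mul_mem_right g⁻¹ c _ (Θ.θinv_mem g x hx)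

theorem mul_rightAct {g : G} (r : A) {x : A} (hx : x ∈ Θ.D g) (c : A) :
    Θ.rightAct g (r * x) c = r * Θ.rightAct g x c := by
  have rightAct_mul :
      ∀ s ∈ Θ.D g, ∀ t ∈ Θ.D g, Θ.rightAct g (s * t) c = s * Θ.rightAct g t c := by
    intro s hs t ht
    rw [rightAct, rightAct, Θ.θinv_mul g hs ht, mul_assoc,
      Θ.θ_mul g _ _ (Θ.θinv_mem g s hs) (Θ.mul_mem_right g⁻¹ c _ (Θ.θinv_mem g t ht)),
      Θ.θ_right_inv g s hs]
  rw [← Θ.idem g] at hx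
  refine IsAdditiveOn.eqOn_setMul
    ((Θ.rightAct_add g c).comp (IsAdditiveOn.mul_left r) fun y => Θ.mul_mem_left g r y)
    ((IsAdditiveOn.mul_left r).comp (Θ.rightAct_add g c) (T := ⊤)
      fun _ _ => AddSubgroup.mem_top _)
    (Θ.idem g).le (fun s hs t ht => ?_) x hx
  rw [← mul_assoc, rightAct_mul _ (Θ.mul_mem_left g r s hs) t ht, rightAct_mul s hs t ht,
    mul_assoc]

theorem rightAct_wL {g h : G} {x : A} (hx : x ∈ setMul (Θ.D g) (Θ.D (g * h))) (c : A) :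
    Θ.rightAct (g * h) (Θ.wL g h x) c = Θ.wL g h (Θ.rightAct (g * h) x c) := by
  refine Θ.map_wL (f := fun y => Θ.rightAct (g * h) y c)
    ((Θ.rightAct_add (g * h) c).mono (Θ.setMul_le_D_right _ _)) (fun y hy => ?_)
    (fun r y hy => Θ.mul_rightAct r (Θ.setMul_le_D_right _ _ hy) c) hx
  rw [Θ.setMul_D_eq_mul_inv] at hy ⊢
  exact Θ.rightAct_mem_setMul hy c

theorem rightAct_wR_θ {g h : G} {u b : A} (hu : u ∈ Θ.D g⁻¹) (hb : b ∈ Θ.D h) (c : A) :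
    Θ.rightAct (g * h) (Θ.wR g h (Θ.θ g (u * b))) c =
      Θ.wR g h (Θ.θ g (u * Θ.rightAct h b c)) := by
  have hub : u * b ∈ setMul (Θ.D h) (Θ.D (h * (h⁻¹ * g⁻¹))) := by
    rw [mul_inv_cancel_left, Θ.commute]
    exact mul_mem_setMul hu hb
  set v := Θ.θinv h (u * b)
  have hv : v ∈ setMul (Θ.D h⁻¹) (Θ.D (h⁻¹ * g⁻¹)) := Θ.θinv_mem_setMul hub
  have hvc : v * c ∈ setMul (Θ.D h⁻¹) (Θ.D (h⁻¹ * g⁻¹)) :=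
    mul_mem_setMul_right (Θ.mul_mem_right _) c hv
  have hθv : Θ.θ h v = u * b := Θ.θ_right_inv h _ (Θ.setMul_le_D_left _ _ hub)
  have hv' : v ∈ Θ.D (g * h)⁻¹ := by
    rw [mul_inv_rev]
    exact Θ.setMul_le_D_right _ _ hv
  calc Θ.rightAct (g * h) (Θ.wR g h (Θ.θ g (u * b))) c
      = Θ.rightAct (g * h) (Θ.wL g h (Θ.θ (g * h) v)) c := by rw [← hθv, Θ.wR_θ_θ hv]
    _ = Θ.wL g h (Θ.θ (g * h) (v * c)) := by
      rw [Θ.rightAct_wL (Θ.θ_mul_mem_setMul hv), Θ.rightAct_θ _ hv']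
    _ = Θ.wR g h (Θ.θ g (Θ.θ h (v * c))) := (Θ.wR_θ_θ hvc).symm
    _ = Θ.wR g h (Θ.θ g (u * Θ.rightAct h b c)) := by
      rw [← Θ.mul_rightAct u hb, ← hθv, Θ.rightAct_θ h (Θ.setMul_le_D_left _ _ hv)]

end TwistedPartialAction

/-- STATEMENT 5, Theorem 2.4: the crossed product `A ⋊_Θ G = ⊕_{g} D_g δ_g`
with multiplication `(a δ_g)·(b δ_h) = θ_g(θ_g⁻¹(a)·b)·w_{g,h} δ_{gh}` is an
associative algebra: the monomial products land in the correct homogeneous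
components (so that the multiplication is well-defined on the direct sum,
where it is extended `k`-bilinearly) and satisfy the associativity law
`(a δ_g · b δ_h) · c δ_t = a δ_g · (b δ_h · c δ_t)`. -/
theorem crossedProduct_assoc {k G A : Type} [CommRing k] [Group G]
    [NonUnitalRing A] [Module k A] (Θ : TwistedPartialAction k G A) :
    (∀ (g h : G) (a b : A), a ∈ Θ.D g → b ∈ Θ.D h →
      crossedMul Θ g h a b ∈ Θ.D (g * h)) ∧
    (∀ (g h t : G) (a b c : A), a ∈ Θ.D g → b ∈ Θ.D h → c ∈ Θ.D t →
      crossedMul Θ (g * h) t (crossedMul Θ g h a b) c =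
        crossedMul Θ g (h * t) a (crossedMul Θ h t b c)) := by
  refine ⟨fun g h a b ha hb =>
    Θ.setMul_le_D_right _ _ (Θ.wR_mem g h _ (Θ.rightAct_mem ha hb)), ?_⟩
  intro g h t a b c ha hb hc
  have hu := Θ.θinv_mem g a ha
  have hbc := Θ.rightAct_mem hb hc
  have hcocycle : Θ.θinv g a * Θ.rightAct h b c ∈
      setMul (setMul (Θ.D g⁻¹) (Θ.D h)) (Θ.D (h * t)) := by
    rw [setMul_assoc]
    exact mul_mem_setMul hu hbc
  show Θ.wR (g * h) t (Θ.rightAct (g * h) (Θ.wR g h (Θ.θ g (Θ.θinv g a * b))) c) =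
    Θ.wR g (h * t) (Θ.θ g (Θ.θinv g a * Θ.wR h t (Θ.rightAct h b c)))
  rw [Θ.rightAct_wR_θ hu hb, Θ.mul_wR _ hbc, Θ.cocycle g h t _ hcocycle]
end

section
/- Let (R, R', M, M', τ, τ') be a Morita context whose linking algebra C = [[R, M],[M', R']] is idempotent, and suppose there exist multipliers u, v of C with uv = e₁₁ and vu = e₂₂ (where e₁₁, e₂₂ are the obvious corner multipliers). Then u, v can be chosen such that the map θ : R' → R given by r' ↦ u·r'·v is a ring isomorphism, with inverse r ↦ v·r·u. -/
/-- A Morita context `(R, R', M, M', τ, τ')` between (non-necessarily unital)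
rings `R` and `R'`:  `M` is an `(R,R')`-bimodule, `M'` an `(R',R)`-bimodule,
and `p`/`p'` are the balanced biadditive pairings induced by
`τ : M ⊗_{R'} M' → R` and `τ' : M' ⊗_R M → R'`, satisfying the mixed
associativity conditions. -/
structure MoritaContext (R R' M M' : Type) [NonUnitalRing R] [NonUnitalRing R']
    [AddCommGroup M] [AddCommGroup M'] where
  sRM : R → M → M
  sMR : M → R' → M
  sRM' : R' → M' → M'
  sMR' : M' → R → M'
  p : M → M' → R
  p' : M' → M → R'
  sRM_add_left : ∀ (r s : R) (m : M), sRM (r + s) m = sRM r m + sRM s m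
  sRM_add_right : ∀ (r : R) (m n : M), sRM r (m + n) = sRM r m + sRM r n
  sMR_add_left : ∀ (m n : M) (r' : R'), sMR (m + n) r' = sMR m r' + sMR n r'
  sMR_add_right : ∀ (m : M) (r' s' : R'), sMR m (r' + s') = sMR m r' + sMR m s'
  sRM'_add_left : ∀ (r' s' : R') (m' : M'), sRM' (r' + s') m' = sRM' r' m' + sRM' s' m'
  sRM'_add_right : ∀ (r' : R') (m' n' : M'), sRM' r' (m' + n') = sRM' r' m' + sRM' r' n'
  sMR'_add_left : ∀ (m' n' : M') (r : R), sMR' (m' + n') r = sMR' m' r + sMR' n' r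
  sMR'_add_right : ∀ (m' : M') (r s : R), sMR' m' (r + s) = sMR' m' r + sMR' m' s
  p_add_left : ∀ (m n : M) (m' : M'), p (m + n) m' = p m m' + p n m'
  p_add_right : ∀ (m : M) (m' n' : M'), p m (m' + n') = p m m' + p m n'
  p'_add_left : ∀ (m' n' : M') (m : M), p' (m' + n') m = p' m' m + p' n' m
  p'_add_right : ∀ (m' : M') (m n : M), p' m' (m + n) = p' m' m + p' m' n
  sRM_mul : ∀ (r s : R) (m : M), sRM (r * s) m = sRM r (sRM s m)
  sMR_mul : ∀ (m : M) (r' s' : R'), sMR (sMR m r') s' = sMR m (r' * s')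
  bimod_M : ∀ (r : R) (m : M) (r' : R'), sMR (sRM r m) r' = sRM r (sMR m r')
  sRM'_mul : ∀ (r' s' : R') (m' : M'), sRM' (r' * s') m' = sRM' r' (sRM' s' m')
  sMR'_mul : ∀ (m' : M') (r s : R), sMR' (sMR' m' r) s = sMR' m' (r * s)
  bimod_M' : ∀ (r' : R') (m' : M') (r : R), sMR' (sRM' r' m') r = sRM' r' (sMR' m' r)
  p_left : ∀ (r : R) (m : M) (m' : M'), p (sRM r m) m' = r * p m m'
  p_right : ∀ (m : M) (m' : M') (r : R), p m (sMR' m' r) = p m m' * r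
  p_balanced : ∀ (m : M) (r' : R') (m' : M'), p (sMR m r') m' = p m (sRM' r' m')
  p'_left : ∀ (r' : R') (m' : M') (m : M), p' (sRM' r' m') m = r' * p' m' m
  p'_right : ∀ (m' : M') (m : M) (r' : R'), p' m' (sMR m r') = p' m' m * r'
  p'_balanced : ∀ (m' : M') (r : R) (m : M), p' (sMR' m' r) m = p' m' (sRM r m)
  assoc₁ : ∀ (m₁ : M) (m' : M') (m₂ : M), sRM (p m₁ m') m₂ = sMR m₁ (p' m' m₂)
  assoc₂ : ∀ (m'₁ : M') (m : M) (m'₂ : M'), sRM' (p' m'₁ m) m'₂ = sMR' m'₁ (p m m'₂)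

variable {R R' M M' : Type} [NonUnitalRing R] [NonUnitalRing R']
  [AddCommGroup M] [AddCommGroup M']

/-- The multiplication of the linking algebra `C = [[R, M], [M', R']]` of a
Morita context, an element `[[r, m], [m', r']]` being encoded as the tuple
`(r, m, m', r')`. -/
def lmul (c : MoritaContext R R' M M') (x y : R × M × M' × R') : R × M × M' × R' :=
  (x.1 * y.1 + c.p x.2.1 y.2.2.1,
   c.sRM x.1 y.2.1 + c.sMR x.2.1 y.2.2.2,
   c.sMR' x.2.2.1 y.1 + c.sRM' x.2.2.2 y.2.2.1,
   c.p' x.2.2.1 y.2.1 + x.2.2.2 * y.2.2.2)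

/-- A multiplier `(L, Rm)` of the linking algebra `C` of a Morita context. -/
structure CMult (c : MoritaContext R R' M M') where
  L : R × M × M' × R' → R × M × M' × R'
  Rm : R × M × M' × R' → R × M × M' × R'
  L_add : ∀ x y, L (x + y) = L x + L y
  R_add : ∀ x y, Rm (x + y) = Rm x + Rm y
  L_mul : ∀ x y, L (lmul c x y) = lmul c (L x) y
  R_mul : ∀ x y, Rm (lmul c x y) = lmul c x (Rm y)
  compat : ∀ x y, lmul c (Rm x) y = lmul c x (L y)

/-- Left action of the corner multiplier `e₁₁` on the linking algebra. -/
def e11L (x : R × M × M' × R') : R × M × M' × R' := (x.1, x.2.1, 0, 0)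

/-- Right action of the corner multiplier `e₁₁` on the linking algebra. -/
def e11R (x : R × M × M' × R') : R × M × M' × R' := (x.1, 0, x.2.2.1, 0)

/-- Left action of the corner multiplier `e₂₂` on the linking algebra. -/
def e22L (x : R × M × M' × R') : R × M × M' × R' := (0, 0, x.2.2.1, x.2.2.2)

/-- Right action of the corner multiplier `e₂₂` on the linking algebra. -/
def e22R (x : R × M × M' × R') : R × M × M' × R' := (0, x.2.1, 0, x.2.2.2)

/-- `u·v = e₁₁` and `v·u = e₂₂` in the multiplier algebra of the linking
algebra (recall `L_{uv} = L_u ∘ L_v` and `R_{uv} = R_v ∘ R_u`). -/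
def CornerUV (c : MoritaContext R R' M M') (u v : CMult c) : Prop :=
  (∀ x, u.L (v.L x) = e11L x) ∧ (∀ x, v.Rm (u.Rm x) = e11R x) ∧
  (∀ x, v.L (u.L x) = e22L x) ∧ (∀ x, u.Rm (v.Rm x) = e22R x)

/-- The linking algebra is idempotent: `C·C = C`. -/
def LinkIdem (c : MoritaContext R R' M M') : Prop :=
  AddSubgroup.closure
    (Set.image2 (lmul c) (Set.univ : Set (R × M × M' × R')) Set.univ) = ⊤

/-!
Write `u x v` for `v.Rm (u.L x)`. Since `C = C·C`, left and right multipliers commute, so the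
actions of `uv = e₁₁` and `vu = e₂₂` can be moved across such a sandwich. For `r'` in the corner
`e₂₂ C e₂₂` this gives `u r' v = e₁₁ (u r' v) e₁₁ ∈ R`, `(u a v)(u b v) = u a (vu) b v = u (ab) v`
and `v (u r' v) u = e₂₂ r' e₂₂ = r'`; symmetrically for `r ∈ R`.
-/

namespace MoritaContext

variable (c : MoritaContext R R' M M')

@[simp] lemma p_zero_left (m' : M') : c.p 0 m' = 0 :=
  (AddMonoidHom.mk' (c.p · m') (c.p_add_left · · m')).map_zero

@[simp] lemma p'_zero_left (m : M) : c.p' 0 m = 0 :=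
  (AddMonoidHom.mk' (c.p' · m) (c.p'_add_left · · m)).map_zero

@[simp] lemma sRM_zero_left (m : M) : c.sRM 0 m = 0 :=
  (AddMonoidHom.mk' (c.sRM · m) (c.sRM_add_left · · m)).map_zero

@[simp] lemma sMR_zero_left (r' : R') : c.sMR 0 r' = 0 :=
  (AddMonoidHom.mk' (c.sMR · r') (c.sMR_add_left · · r')).map_zero

@[simp] lemma sMR'_zero_left (r : R) : c.sMR' 0 r = 0 :=
  (AddMonoidHom.mk' (c.sMR' · r) (c.sMR'_add_left · · r)).map_zero

@[simp] lemma sRM'_zero_right (r' : R') : c.sRM' r' 0 = 0 :=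
  (AddMonoidHom.mk' (c.sRM' r') (c.sRM'_add_right r')).map_zero

end MoritaContext

lemma lmul_corner₂₂ (c : MoritaContext R R' M M') (a b : R') :
    lmul c (0, 0, 0, a) (0, 0, 0, b) = (0, 0, 0, a * b) := by
  simp [lmul]

namespace CMult

variable {c : MoritaContext R R' M M'}

/-- Left and right multipliers commute on products `x * y`, hence on all of `C = C·C`. -/
lemma L_Rm_comm (hidem : LinkIdem c) (w z : CMult c) (x : R × M × M' × R') :
    w.L (z.Rm x) = z.Rm (w.L x) := by
  let wL := AddMonoidHom.mk' w.L w.L_add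
  let zR := AddMonoidHom.mk' z.Rm z.R_add
  have h : wL.comp zR = zR.comp wL := by
    refine AddMonoidHom.eq_of_eqOn_dense hidem ?_
    rintro _ ⟨a, -, b, -, rfl⟩
    change w.L (z.Rm (lmul c a b)) = z.Rm (w.L (lmul c a b))
    rw [z.R_mul, w.L_mul, w.L_mul, z.R_mul]
  exact DFunLike.congr_fun h x

section Sandwich

variable {u v : CMult c} {eL eR fL fR : R × M × M' × R' → R × M × M' × R'}

lemma corner_L_sandwich (hidem : LinkIdem c) (hL : ∀ x, u.L (v.L x) = eL x)
    (hL' : ∀ x, v.L (u.L x) = fL x) (x : R × M × M' × R') :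
    eL (v.Rm (u.L x)) = v.Rm (u.L (fL x)) := by
  rw [← hL, L_Rm_comm hidem v v, L_Rm_comm hidem u v, hL']

lemma corner_R_sandwich (hidem : LinkIdem c) (hR : ∀ x, v.Rm (u.Rm x) = eR x)
    (hR' : ∀ x, u.Rm (v.Rm x) = fR x) (x : R × M × M' × R') :
    eR (v.Rm (u.L x)) = v.Rm (u.L (fR x)) := by
  rw [← L_Rm_comm hidem u v, ← hR, ← L_Rm_comm hidem u u, hR']

lemma corner_sandwich_of_fixed (hidem : LinkIdem c) (hL : ∀ x, u.L (v.L x) = eL x)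
    (hR : ∀ x, v.Rm (u.Rm x) = eR x) (hL' : ∀ x, v.L (u.L x) = fL x)
    (hR' : ∀ x, u.Rm (v.Rm x) = fR x) {x : R × M × M' × R'} (hfL : fL x = x)
    (hfR : fR x = x) :
    eR (eL (v.Rm (u.L x))) = v.Rm (u.L x) := by
  rw [corner_L_sandwich hidem hL hL', corner_R_sandwich hidem hR hR', hfL, hfR]

lemma lmul_sandwich (hidem : LinkIdem c) (hL' : ∀ x, v.L (u.L x) = fL x)
    (x y : R × M × M' × R') :
    lmul c (v.Rm (u.L x)) (v.Rm (u.L y)) = v.Rm (u.L (lmul c x (fL y))) := by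
  rw [u.L_mul, v.R_mul, ← hL', ← L_Rm_comm hidem v v, v.compat]

lemma sandwich_sandwich (hidem : LinkIdem c) (hL' : ∀ x, v.L (u.L x) = fL x)
    (hR' : ∀ x, u.Rm (v.Rm x) = fR x) (x : R × M × M' × R') :
    u.Rm (v.L (v.Rm (u.L x))) = fR (fL x) := by
  rw [L_Rm_comm hidem v v, hL', hR']

end Sandwich

end CMult

/-- STATEMENT 8, Proposition 4.5: if the linking algebra of a Morita context
is idempotent and admits multipliers `u, v` with `uv = e₁₁`, `vu = e₂₂`, then
`u, v` can be chosen so that `θ : R' → R`, `r' ↦ u·r'·v` is a ring isomorphism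
with inverse `r ↦ v·r·u`. -/
theorem morita_corner_iso (c : MoritaContext R R' M M')
    (hidem : LinkIdem c)
    (h : ∃ u v : CMult c, CornerUV c u v) :
    ∃ u v : CMult c, CornerUV c u v ∧
      (let θ : R' → R := fun r' => (v.Rm (u.L ((0 : R), (0 : M), (0 : M'), r'))).1
       let θ' : R → R' := fun r => (u.Rm (v.L (r, (0 : M), (0 : M'), (0 : R')))).2.2.2
       (∀ a b : R', θ (a + b) = θ a + θ b) ∧
       (∀ a b : R', θ (a * b) = θ a * θ b) ∧
       (∀ a : R', θ' (θ a) = a) ∧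
       (∀ r : R, θ (θ' r) = r)) := by
  obtain ⟨u, v, huv⟩ := h
  have ⟨hL, hR, hL', hR'⟩ := huv
  refine ⟨u, v, huv, ?_⟩
  intro θ θ'
  have corner₁₁ (a : R') : v.Rm (u.L (0, 0, 0, a)) = (θ a, 0, 0, 0) :=
    (CMult.corner_sandwich_of_fixed hidem hL hR hL' hR' rfl rfl).symm
  have corner₂₂ (r : R) : u.Rm (v.L (r, 0, 0, 0)) = (0, 0, 0, θ' r) :=
    (CMult.corner_sandwich_of_fixed hidem hL' hR' hL hR rfl rfl).symm
  refine ⟨fun a b => ?_, fun a b => ?_, fun a => ?_, fun r => ?_⟩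
  · have hsum : ((0 : R), (0 : M), (0 : M'), a + b) = (0, 0, 0, a) + (0, 0, 0, b) := by simp
    change (v.Rm (u.L (0, 0, 0, a + b))).1 = _
    rw [hsum, u.L_add, v.R_add]
    rfl
  · calc θ (a * b) = (v.Rm (u.L (lmul c (0, 0, 0, a) (e22L (0, 0, 0, b))))).1 := by
          change (v.Rm (u.L (0, 0, 0, a * b))).1 = _
          rw [← lmul_corner₂₂]; rfl
      _ = (lmul c (v.Rm (u.L (0, 0, 0, a))) (v.Rm (u.L (0, 0, 0, b)))).1 := by
          rw [CMult.lmul_sandwich hidem hL']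
      _ = θ a * θ b := by
          rw [corner₁₁, corner₁₁]; simp [lmul]
  · change (u.Rm (v.L (θ a, 0, 0, 0))).2.2.2 = a
    rw [← corner₁₁, CMult.sandwich_sandwich hidem hL' hR']
    rfl
  · change (v.Rm (u.L (0, 0, 0, θ' r))).1 = r
    rw [← corner₂₂, CMult.sandwich_sandwich hidem hL hR]
    rfl
end

section
/- Let R be a left s-unital ring and M a left R-module with RM = M. Then for every x ∈ M one has x ∈ Rx. In particular, M is torsion-free (Rx = 0 implies x = 0). -/
/-!
The elements `x` with `x ∈ Rx` form an additive subgroup of `M`: it is closed under negation,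
and if `r • x = x` and `s • y = y`, a common left unit `u` of `r` and `s` gives
`u • (x + y) = (u * r) • x + (u * s) • y = x + y`. This subgroup contains every `r • y`, because
a left unit `e` of `r` gives `e • (r • y) = (e * r) • y = r • y`; as these generate `M`, it is
all of `M`.
-/

variable {R : Type*} [NonUnitalRing R]

lemma exists_mul_eq_self_and_mul_eq_self (hsu : ∀ r : R, ∃ y : R, y * r = r) (a b : R) :
    ∃ u : R, u * a = a ∧ u * b = b := by
  obtain ⟨e, he⟩ := hsu a
  obtain ⟨f, hf⟩ := hsu (b - e * b)
  -- `u = e + f - f * e` is `1 - (1 - f) * (1 - e)` computed in the unitization.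
  refine ⟨e + f - f * e, ?_, ?_⟩
  · rw [sub_mul, add_mul, he, mul_assoc, he]
    abel
  · have hfb : f * b - f * (e * b) = b - e * b := by rw [← mul_sub, hf]
    calc (e + f - f * e) * b = e * b + (f * b - f * (e * b)) := by
          rw [sub_mul, add_mul, mul_assoc]; abel
      _ = b := by rw [hfb]; abel

variable {M : Type*} [AddCommGroup M] (smul : R → M → M)

lemma exists_smul_eq_self_of_mem_closure
    (smul_add_right : ∀ (r : R) (x y : M), smul r (x + y) = smul r x + smul r y)
    (smul_mul : ∀ (r s : R) (x : M), smul (r * s) x = smul r (smul s x))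
    (hsu : ∀ r : R, ∃ y : R, y * r = r) {x : M}
    (hx : x ∈ AddSubgroup.closure {x : M | ∃ r y, x = smul r y}) :
    ∃ r : R, smul r x = x := by
  let smulHom (r : R) : M →+ M := AddMonoidHom.mk' (smul r) (smul_add_right r)
  induction hx using AddSubgroup.closure_induction with
  | mem z hz =>
    obtain ⟨r, y, rfl⟩ := hz
    obtain ⟨e, he⟩ := hsu r
    exact ⟨e, by rw [← smul_mul, he]⟩
  | zero => exact ⟨0, (smulHom 0).map_zero⟩
  | add a b _ _ ha hb =>
    obtain ⟨r, hr⟩ := ha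
    obtain ⟨s, hs⟩ := hb
    obtain ⟨u, hur, hus⟩ := exists_mul_eq_self_and_mul_eq_self hsu r s
    exact ⟨u, by rw [smul_add_right, ← hr, ← hs, ← smul_mul, ← smul_mul, hur, hus]⟩
  | neg a _ ha =>
    obtain ⟨r, hr⟩ := ha
    exact ⟨r, ((smulHom r).map_neg a).trans (congrArg Neg.neg hr)⟩

theorem sunital_module_mem_general (R M : Type) [NonUnitalRing R] [AddCommGroup M]
    (smul : R → M → M)
    (smul_add_right : ∀ (r : R) (x y : M), smul r (x + y) = smul r x + smul r y)
    (smul_mul : ∀ (r s : R) (x : M), smul (r * s) x = smul r (smul s x))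
    (hsu : ∀ r : R, ∃ y : R, y * r = r)
    (hRM : AddSubgroup.closure {x : M | ∃ r y, x = smul r y} = ⊤) :
    (∀ x : M, ∃ r : R, smul r x = x) ∧
    (∀ x : M, (∀ r : R, smul r x = 0) → x = 0) := by
  have mem_smul_self (x : M) : ∃ r : R, smul r x = x :=
    exists_smul_eq_self_of_mem_closure smul smul_add_right smul_mul hsu
      (hRM ▸ AddSubgroup.mem_top x)
  refine ⟨mem_smul_self, fun x hx => ?_⟩
  obtain ⟨r, hr⟩ := mem_smul_self x
  rw [← hr, hx r]

/-- STATEMENT 10, Lemma 5.7: if `R` is a left `s`-unital ring and `M` a left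
`R`-module with `RM = M`, then every `x ∈ M` satisfies `x ∈ Rx`; in
particular `M` is torsion-free. -/
theorem sunital_module_mem (R M : Type) [NonUnitalRing R] [AddCommGroup M]
    (smul : R → M → M)
    (smul_add_left : ∀ (r s : R) (x : M), smul (r + s) x = smul r x + smul s x)
    (smul_add_right : ∀ (r : R) (x y : M), smul r (x + y) = smul r x + smul r y)
    (smul_mul : ∀ (r s : R) (x : M), smul (r * s) x = smul r (smul s x))
    (hsu : ∀ r : R, ∃ y : R, y * r = r)
    (hRM : AddSubgroup.closure {x : M | ∃ r y, x = smul r y} = ⊤) :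
    (∀ x : M, ∃ r : R, smul r x = x) ∧
    (∀ x : M, (∀ r : R, smul r x = 0) → x = 0) :=
  sunital_module_mem_general R M smul smul_add_right smul_mul hsu hRM
end

section
/- Let (R, R', M, M', τ, τ') be a Morita context with R and R' s-unital rings, τ and τ' surjective, M'R = R'M' = M' and MR' = RM = M. Then M' ⊗_R R ≅ M' via m'⊗r ↦ m'r, and the map τ : M ⊗_{R'} M' → R is bijective (similarly τ' is bijective). -/
variable {R R' M M' : Type} [NonUnitalRing R] [NonUnitalRing R']
  [AddCommGroup M] [AddCommGroup M']

/-!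
Everything comes from local units. Since `R` is right s-unital and `M'R = M'`, every finite
subset of `M'` has a common right unit `e ∈ R`, and `m' ↦ m' ⊗ e` inverts `m' ⊗ r ↦ m'r`.
For `τ`, take a common left unit `e` of `m₁, …, mₙ`; it lies in the additive span of the image
of `τ`, and mixed associativity gives `τ(a ⊗ a')mᵢ ⊗ m'ᵢ = a ⊗ a'τ(mᵢ ⊗ m'ᵢ)`, so
`Σ mᵢ ⊗ m'ᵢ = Σ emᵢ ⊗ m'ᵢ` vanishes once `Σ τ(mᵢ ⊗ m'ᵢ) = 0`. The case of `τ'` is that of `τ`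
for the context with the two sides exchanged.
-/

section LocalUnits

open MulOpposite

variable {A X : Type*} [NonUnitalRing A] [AddCommGroup X]

theorem exists_left_unit_pair (hA : ∀ a : A, ∃ e, e * a = a) (a b : A) :
    ∃ e : A, e * a = a ∧ e * b = b := by
  obtain ⟨u, hu⟩ := hA a
  obtain ⟨v, hv⟩ := hA (b - u * b)
  -- `1 - e = (1 - v) (1 - u)` kills `a` and `b` in the unitization
  refine ⟨u + v - v * u, ?_, ?_⟩
  · calc (u + v - v * u) * a = u * a + (v * a - v * (u * a)) := by noncomm_ring
      _ = a := by rw [hu, sub_self, add_zero]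
  · calc (u + v - v * u) * b = u * b + v * (b - u * b) := by noncomm_ring
      _ = b := by rw [hv, add_sub_cancel]

theorem exists_left_unit_op (hA : ∀ a : A, ∃ e, a * e = a) (a : Aᵐᵒᵖ) : ∃ e, e * a = a :=
  let ⟨e, he⟩ := hA a.unop
  ⟨op e, congrArg op he⟩

theorem exists_right_unit_pair (hA : ∀ a : A, ∃ e, a * e = a) (a b : A) :
    ∃ e : A, a * e = a ∧ b * e = b := by
  obtain ⟨e, ha, hb⟩ := exists_left_unit_pair (exists_left_unit_op hA) (op a) (op b)
  exact ⟨e.unop, congrArg unop ha, congrArg unop hb⟩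

theorem exists_left_unit_of_closure_eq_top (act : A → X → X)
    (hadd : ∀ a x y, act a (x + y) = act a x + act a y)
    (hmul : ∀ a b x, act (a * b) x = act a (act b x))
    (hA : ∀ a : A, ∃ e, e * a = a)
    (hX : AddSubgroup.closure {x | ∃ a x₀, x = act a x₀} = ⊤) (t : Finset X) :
    ∃ e, ∀ x ∈ t, act e x = x := by
  have fix_of_mul_eq {g e : A} {x : X} (hg : g * e = e) (hx : act e x = x) : act g x = x := by
    rw [← hx, ← hmul, hg]
  have unit (x : X) : ∃ e, act e x = x := by
    induction (hX ▸ AddSubgroup.mem_top x : x ∈ AddSubgroup.closure _)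
      using AddSubgroup.closure_induction with
    | mem _ hy =>
      obtain ⟨a, x₀, rfl⟩ := hy
      obtain ⟨e, he⟩ := hA a
      exact ⟨e, by rw [← hmul, he]⟩
    | zero => exact ⟨0, (AddMonoidHom.mk' (act 0) (hadd 0)).map_zero⟩
    | add y z _ _ hy hz =>
      obtain ⟨⟨e₁, he₁⟩, ⟨e₂, he₂⟩⟩ := And.intro hy hz
      obtain ⟨g, hg₁, hg₂⟩ := exists_left_unit_pair hA e₁ e₂
      exact ⟨g, by rw [hadd, fix_of_mul_eq hg₁ he₁, fix_of_mul_eq hg₂ he₂]⟩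
    | neg y _ hy =>
      obtain ⟨e, he⟩ := hy
      have act_neg : act e (-y) = -act e y := (AddMonoidHom.mk' (act e) (hadd e)).map_neg y
      exact ⟨e, by rw [act_neg, he]⟩
  classical
  induction t using Finset.induction_on with
  | empty => exact ⟨0, by simp⟩
  | insert x t _ ht =>
    obtain ⟨⟨e₁, he₁⟩, ⟨e₂, he₂⟩⟩ := And.intro (unit x) ht
    obtain ⟨g, hg₁, hg₂⟩ := exists_left_unit_pair hA e₁ e₂
    refine ⟨g, Finset.forall_mem_insert _ _ _ |>.mpr ⟨?_, ?_⟩⟩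
    · exact fix_of_mul_eq hg₁ he₁
    · exact fun y hy => fix_of_mul_eq hg₂ (he₂ y hy)

theorem exists_right_unit_of_closure_eq_top (act : X → A → X)
    (hadd : ∀ x y a, act (x + y) a = act x a + act y a)
    (hmul : ∀ x a b, act (act x a) b = act x (a * b))
    (hA : ∀ a : A, ∃ e, a * e = a)
    (hX : AddSubgroup.closure {x | ∃ x₀ a, x = act x₀ a} = ⊤) (t : Finset X) :
    ∃ e, ∀ x ∈ t, act x e = x := by
  have hXop : AddSubgroup.closure {x | ∃ a : Aᵐᵒᵖ, ∃ x₀, x = act x₀ a.unop} = ⊤ := by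
    convert hX using 2
    ext x
    constructor
    · rintro ⟨a, x₀, rfl⟩
      exact ⟨x₀, a.unop, rfl⟩
    · rintro ⟨x₀, a, rfl⟩
      exact ⟨op a, x₀, rfl⟩
  obtain ⟨e, he⟩ := exists_left_unit_of_closure_eq_top (A := Aᵐᵒᵖ) (fun a x => act x a.unop)
    (fun a x y => hadd x y a.unop) (fun a b x => (hmul x b.unop a.unop).symm)
    (exists_left_unit_op hA) hXop t
  exact ⟨e.unop, he⟩

end LocalUnits

theorem existsUnique_addMonoidHom_of_balanced {A X T : Type*} [NonUnitalRing A]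
    [AddCommGroup X] [AddCommGroup T] (act : X → A → X)
    (hadd : ∀ x y a, act (x + y) a = act x a + act y a)
    (hmul : ∀ x a b, act (act x a) b = act x (a * b))
    (hA : ∀ a : A, ∃ e, a * e = a)
    (hX : AddSubgroup.closure {x | ∃ x₀ a, x = act x₀ a} = ⊤)
    (β : X → A → T) (hβ : ∀ x y a, β (x + y) a = β x a + β y a)
    (hbal : ∀ x a b, β (act x a) b = β x (a * b)) :
    ∃! φ : X →+ T, ∀ x a, φ (act x a) = β x a := by
  classical
  have unit_pair (x y : X) : ∃ e, act x e = x ∧ act y e = y := by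
    obtain ⟨e, he⟩ := exists_right_unit_of_closure_eq_top act hadd hmul hA hX {x, y}
    exact ⟨e, he x (by simp), he y (by simp)⟩
  have β_unit_eq {x : X} {e f : A} (he : act x e = x) (hf : act x f = x) : β x e = β x f := by
    obtain ⟨g, heg, hfg⟩ := exists_right_unit_pair hA e f
    calc β x e = β (act x e) g := by rw [hbal, heg]
      _ = β (act x f) g := by rw [he, hf]
      _ = β x f := by rw [hbal, hfg]
  choose u hu using fun x => (unit_pair x x).imp fun _ => And.left
  have φ_add (x y : X) : β (x + y) (u (x + y)) = β x (u x) + β y (u y) := by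
    obtain ⟨e, hx, hy⟩ := unit_pair x y
    rw [β_unit_eq (hu _) (by rw [hadd, hx, hy]), β_unit_eq (hu x) hx, β_unit_eq (hu y) hy, hβ]
  have φ_act (x : X) (a : A) : β (act x a) (u (act x a)) = β x a := by
    obtain ⟨e, he⟩ := hA a
    rw [β_unit_eq (hu _) (by rw [hmul, he] : act (act x a) e = act x a), hbal, he]
  refine ⟨AddMonoidHom.mk' (fun x => β x (u x)) φ_add, φ_act, fun ψ hψ => ?_⟩
  ext x
  calc ψ x = ψ (act x (u x)) := by rw [hu]
    _ = β x (u x) := hψ x (u x)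

namespace MoritaContext

variable (c : MoritaContext R R' M M')

def swap : MoritaContext R' R M' M where
  sRM := c.sRM'
  sMR := c.sMR'
  sRM' := c.sRM
  sMR' := c.sMR
  p := c.p'
  p' := c.p
  sRM_add_left := c.sRM'_add_left
  sRM_add_right := c.sRM'_add_right
  sMR_add_left := c.sMR'_add_left
  sMR_add_right := c.sMR'_add_right
  sRM'_add_left := c.sRM_add_left
  sRM'_add_right := c.sRM_add_right
  sMR'_add_left := c.sMR_add_left
  sMR'_add_right := c.sMR_add_right
  p_add_left := c.p'_add_left
  p_add_right := c.p'_add_right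
  p'_add_left := c.p_add_left
  p'_add_right := c.p_add_right
  sRM_mul := c.sRM'_mul
  sMR_mul := c.sMR'_mul
  bimod_M := c.bimod_M'
  sRM'_mul := c.sRM_mul
  sMR'_mul := c.sMR_mul
  bimod_M' := c.bimod_M
  p_left := c.p'_left
  p_right := c.p'_right
  p_balanced := c.p'_balanced
  p'_left := c.p_left
  p'_right := c.p_right
  p'_balanced := c.p_balanced
  assoc₁ := c.assoc₂
  assoc₂ := c.assoc₁

theorem sum_balanced_eq_zero_of_sum_p_eq_zero (hRl : ∀ r : R, ∃ y, y * r = r)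
    (hτ : AddSubgroup.closure {x : R | ∃ m m', x = c.p m m'} = ⊤)
    (hRM : AddSubgroup.closure {x : M | ∃ r m, x = c.sRM r m} = ⊤)
    {ι T : Type*} [AddCommGroup T] (s : Finset ι) (m : ι → M) (m' : ι → M')
    (hsum : ∑ i ∈ s, c.p (m i) (m' i) = 0) (β : M → M' → T)
    (hβl : ∀ a b x, β (a + b) x = β a x + β b x) (hβr : ∀ a x y, β a (x + y) = β a x + β a y)
    (hbal : ∀ a r' x, β (c.sMR a r') x = β a (c.sRM' r' x)) :
    ∑ i ∈ s, β (m i) (m' i) = 0 := by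
  classical
  obtain ⟨e, he⟩ :=
    exists_left_unit_of_closure_eq_top c.sRM c.sRM_add_right c.sRM_mul hRl hRM (s.image m)
  -- `r ↦ ∑ β (r mᵢ, m'ᵢ)` vanishes on each `τ(a ⊗ a')` by mixed associativity, hence on `R`
  let f : R →+ T := AddMonoidHom.mk' (fun r => ∑ i ∈ s, β (c.sRM r (m i)) (m' i))
    fun r r' => by simp only [c.sRM_add_left, hβl, Finset.sum_add_distrib]
  have hf : f = 0 := by
    refine AddMonoidHom.eq_of_eqOn_dense hτ ?_
    rintro _ ⟨a, a', rfl⟩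
    let g : R →+ T := AddMonoidHom.mk' (fun r => β a (c.sMR' a' r))
      fun r r' => by rw [c.sMR'_add_right, hβr]
    calc f (c.p a a') = ∑ i ∈ s, g (c.p (m i) (m' i)) := by
          simp only [f, g, AddMonoidHom.mk'_apply, c.assoc₁, hbal, c.assoc₂]
      _ = 0 := by rw [← map_sum, hsum, map_zero]
  calc ∑ i ∈ s, β (m i) (m' i) = f e :=
        Finset.sum_congr rfl fun i hi => by rw [he (m i) (Finset.mem_image_of_mem m hi)]
    _ = 0 := by rw [hf, AddMonoidHom.zero_apply]

end MoritaContext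

theorem morita_sunital_tensor_general (c : MoritaContext R R' M M')
    (hRl : ∀ r : R, ∃ y : R, y * r = r) (hRr : ∀ r : R, ∃ y : R, r * y = r)
    (hR'l : ∀ r' : R', ∃ y : R', y * r' = r')
    (hτ : AddSubgroup.closure {x : R | ∃ m m', x = c.p m m'} = ⊤)
    (hτ' : AddSubgroup.closure {x : R' | ∃ m' m, x = c.p' m' m} = ⊤)
    (hM'R : AddSubgroup.closure {x : M' | ∃ m' r, x = c.sMR' m' r} = ⊤)
    (hR'M' : AddSubgroup.closure {x : M' | ∃ r' m', x = c.sRM' r' m'} = ⊤)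
    (hRM : AddSubgroup.closure {x : M | ∃ r m, x = c.sRM r m} = ⊤) :
    (∀ (T : Type) (_ : AddCommGroup T) (β : M' → R → T),
      (∀ a b r, β (a + b) r = β a r + β b r) →
      (∀ a r s, β a (r + s) = β a r + β a s) →
      (∀ a r s, β (c.sMR' a r) s = β a (r * s)) →
      ∃! φ : M' →+ T, ∀ a r, φ (c.sMR' a r) = β a r) ∧
    (∀ (n : ℕ) (m : Fin n → M) (m' : Fin n → M'),
      (∑ i, c.p (m i) (m' i)) = 0 →
      ∀ (T : Type) (_ : AddCommGroup T) (β : M → M' → T),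
        (∀ a b x, β (a + b) x = β a x + β b x) →
        (∀ a x y, β a (x + y) = β a x + β a y) →
        (∀ a r' x, β (c.sMR a r') x = β a (c.sRM' r' x)) →
        (∑ i, β (m i) (m' i)) = 0) ∧
    (∀ (n : ℕ) (m' : Fin n → M') (m : Fin n → M),
      (∑ i, c.p' (m' i) (m i)) = 0 →
      ∀ (T : Type) (_ : AddCommGroup T) (β : M' → M → T),
        (∀ a b x, β (a + b) x = β a x + β b x) →
        (∀ a x y, β a (x + y) = β a x + β a y) →
        (∀ a r x, β (c.sMR' a r) x = β a (c.sRM r x)) →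
        (∑ i, β (m' i) (m i)) = 0) := by
  refine ⟨fun T _ β hβ _ hbal => ?_, fun n m m' hsum T _ β => ?_, fun n m' m hsum T _ β => ?_⟩
  · exact existsUnique_addMonoidHom_of_balanced c.sMR' c.sMR'_add_left c.sMR'_mul hRr hM'R
      β hβ hbal
  · exact c.sum_balanced_eq_zero_of_sum_p_eq_zero hRl hτ hRM _ m m' hsum β
  · exact c.swap.sum_balanced_eq_zero_of_sum_p_eq_zero hR'l hτ' hR'M' _ m' m hsum β

/-- part of the proof of Proposition 6.2: for a Morita context
with `s`-unital rings `R`, `R'`, surjective `τ`, `τ'`, `M'R = R'M' = M'` and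
`MR' = RM = M`, the natural map `M' ⊗_R R → M'`, `m' ⊗ r ↦ m'·r`, is an
isomorphism — expressed by the universal property: every `R`-balanced
biadditive map `β : M' × R → T` factors uniquely through `(m', r) ↦ m'·r` —
and the maps `τ : M ⊗_{R'} M' → R`, `τ' : M' ⊗_R M → R'` are bijective —
surjectivity being the hypothesis, and injectivity expressed by: whenever
`Σᵢ τ(mᵢ ⊗ m'ᵢ) = 0`, the element `Σᵢ mᵢ ⊗ m'ᵢ` is zero, i.e. it is killed by
every balanced biadditive map. -/
theorem morita_sunital_tensor (c : MoritaContext R R' M M')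
    (hRl : ∀ r : R, ∃ y : R, y * r = r) (hRr : ∀ r : R, ∃ y : R, r * y = r)
    (hR'l : ∀ r' : R', ∃ y : R', y * r' = r') (hR'r : ∀ r' : R', ∃ y : R', r' * y = r')
    (hτ : AddSubgroup.closure {x : R | ∃ m m', x = c.p m m'} = ⊤)
    (hτ' : AddSubgroup.closure {x : R' | ∃ m' m, x = c.p' m' m} = ⊤)
    (hM'R : AddSubgroup.closure {x : M' | ∃ m' r, x = c.sMR' m' r} = ⊤)
    (hR'M' : AddSubgroup.closure {x : M' | ∃ r' m', x = c.sRM' r' m'} = ⊤)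
    (hMR' : AddSubgroup.closure {x : M | ∃ m r', x = c.sMR m r'} = ⊤)
    (hRM : AddSubgroup.closure {x : M | ∃ r m, x = c.sRM r m} = ⊤) :
    (∀ (T : Type) (_ : AddCommGroup T) (β : M' → R → T),
      (∀ a b r, β (a + b) r = β a r + β b r) →
      (∀ a r s, β a (r + s) = β a r + β a s) →
      (∀ a r s, β (c.sMR' a r) s = β a (r * s)) →
      ∃! φ : M' →+ T, ∀ a r, φ (c.sMR' a r) = β a r) ∧
    (∀ (n : ℕ) (m : Fin n → M) (m' : Fin n → M'),
      (∑ i, c.p (m i) (m' i)) = 0 →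
      ∀ (T : Type) (_ : AddCommGroup T) (β : M → M' → T),
        (∀ a b x, β (a + b) x = β a x + β b x) →
        (∀ a x y, β a (x + y) = β a x + β a y) →
        (∀ a r' x, β (c.sMR a r') x = β a (c.sRM' r' x)) →
        (∑ i, β (m i) (m' i)) = 0) ∧
    (∀ (n : ℕ) (m' : Fin n → M') (m : Fin n → M),
      (∑ i, c.p' (m' i) (m i)) = 0 →
      ∀ (T : Type) (_ : AddCommGroup T) (β : M' → M → T),
        (∀ a b x, β (a + b) x = β a x + β b x) →
        (∀ a x y, β a (x + y) = β a x + β a y) →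
        (∀ a r x, β (c.sMR' a r) x = β a (c.sRM r x)) →
        (∑ i, β (m' i) (m i)) = 0) :=
  morita_sunital_tensor_general c hRl hRr hR'l hτ hτ' hM'R hR'M' hRM
end
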